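/- arXiv:1308.3151 — 2 statements merged into one kernel-verified Lean document; each statement's English description precedes it below -/
import Mathlib

section
/- Let P(z) = z + P_d(z) + O(‖z‖^{d+1}) be a polynomial map on ℂ^{2n} where P_d is homogeneous of degree d ≥ 2. Then P*ω − ω vanishes to order d at the origin if and only if the 1-form P_d ⌟ ω is closed, i.e., if and only if P_d is a Hamiltonian vector field. -/
/-!
Everything is polynomial. For constant vectors `u`, `v`, the function
`z ↦ ω(DP(z) u, DP(z) v) - ω(u, v)` is the evaluation of a polynomial whose part of degree `d - 1`
is `d(P_d ⌟ ω)(u, v)` (Cartan's formula `L_{P_d} ω = d(P_d ⌟ ω)` for the closed constant form `ω`),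
and all of whose other monomials have degree `≥ d`, i.e. lie in the `d`-th power of the ideal of
the variables. Such polynomials are `O(‖z‖ ^ d)` at the origin, whereas a nonzero homogeneous
polynomial of degree `d - 1` is not, as one sees on a line through a point where it does not
vanish. For the second equivalence, Euler's identity shows that `(d + 1)⁻¹ ∑ₖ zₖ fₖ` is a
potential of a closed 1-form `∑ₖ fₖ dzₖ` with coefficients homogeneous of degree `d`.
-/

noncomputable section

open MvPolynomial Asymptotics

/-- The standard symplectic form on `ℂ^{2n}`, with coordinates indexed by
`Fin n ⊕ Fin n` (the first `n` coordinates are `Sum.inl`, the last `n` are `Sum.inr`). -/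
def stdSymp (n : ℕ) (u v : Fin n ⊕ Fin n → ℂ) : ℂ :=
  ∑ j : Fin n, (u (Sum.inl j) * v (Sum.inr j) - u (Sum.inr j) * v (Sum.inl j))

open Filter Topology

section SympForm

variable {n : ℕ} {A : Type*} [CommRing A]

def sympForm (x y : Fin n ⊕ Fin n → A) : A :=
  ∑ j, (x (Sum.inl j) * y (Sum.inr j) - x (Sum.inr j) * y (Sum.inl j))

/-- The coefficients of the 1-form `x ⌟ ω = ∑ₗ ω(x, eₗ) dzₗ`. -/
def sympInterior (x : Fin n ⊕ Fin n → A) : Fin n ⊕ Fin n → A :=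
  Sum.elim (fun j => -x (Sum.inr j)) fun j => x (Sum.inl j)

theorem stdSymp_eq_sympForm (u v : Fin n ⊕ Fin n → ℂ) : stdSymp n u v = sympForm u v := rfl

theorem map_sympForm {B : Type*} [CommRing B] (φ : A →+* B) (x y : Fin n ⊕ Fin n → A) :
    φ (sympForm x y) = sympForm (fun k => φ (x k)) (fun k => φ (y k)) := by
  simp [sympForm]

theorem sympForm_comm (x y : Fin n ⊕ Fin n → A) : sympForm x y = -sympForm y x := by
  simp only [sympForm, ← Finset.sum_neg_distrib]
  exact Finset.sum_congr rfl fun j _ => by ring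

theorem sympForm_eq_sum_sympInterior_mul (x y : Fin n ⊕ Fin n → A) :
    sympForm x y = ∑ l, sympInterior x l * y l := by
  simp only [sympForm, sympInterior, Fintype.sum_sum_type, Sum.elim_inl, Sum.elim_inr,
    ← Finset.sum_add_distrib]
  exact Finset.sum_congr rfl fun j _ => by ring

theorem sympForm_mem_pow {I : Ideal A} {a b : ℕ} {x y : Fin n ⊕ Fin n → A}
    (hx : ∀ k, x k ∈ I ^ a) (hy : ∀ k, y k ∈ I ^ b) : sympForm x y ∈ I ^ (a + b) := by
  refine Ideal.sum_mem _ fun j _ => Ideal.sub_mem _ ?_ ?_ <;>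
    exact pow_add I a b ▸ Ideal.mul_mem_mul (hx _) (hy _)

theorem sympForm_add_add_sub_mem {I : Ideal A} {e : ℕ} (he : 1 ≤ e)
    {c c' a a' b b' : Fin n ⊕ Fin n → A} (ha : ∀ k, a k ∈ I ^ e) (ha' : ∀ k, a' k ∈ I ^ e)
    (hb : ∀ k, b k ∈ I ^ (e + 1)) (hb' : ∀ k, b' k ∈ I ^ (e + 1)) :
    sympForm (c + a + b) (c' + a' + b') - sympForm c c' - (sympForm a c' + sympForm c a')
      ∈ I ^ (e + 1) := by
  have hsplit : sympForm (c + a + b) (c' + a' + b') - sympForm c c' - (sympForm a c' + sympForm c a')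
      = sympForm c b' + sympForm a (a' + b') + sympForm b (c' + a' + b') := by
    simp only [sympForm, Pi.add_apply, ← Finset.sum_add_distrib, ← Finset.sum_sub_distrib]
    exact Finset.sum_congr rfl fun j _ => by ring
  have hzero : ∀ (x : Fin n ⊕ Fin n → A) k, x k ∈ I ^ 0 := by simp
  have hab' : ∀ k, (a' + b') k ∈ I ^ e := fun k =>
    Ideal.add_mem _ (ha' k) (Ideal.pow_le_pow_right (by omega) (hb' k))
  rw [hsplit]
  refine Ideal.add_mem _ (Ideal.add_mem _ ?_ ?_) ?_
  · simpa using sympForm_mem_pow (hzero c) hb'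
  · exact Ideal.pow_le_pow_right (by omega) (sympForm_mem_pow ha hab')
  · simpa using sympForm_mem_pow hb (hzero (c' + a' + b'))

end SympForm

namespace MvPolynomial

section Algebraic

variable {σ R : Type*} [CommSemiring R]

theorem pderiv_pderiv_comm (i j : σ) (p : MvPolynomial σ R) :
    pderiv i (pderiv j p) = pderiv j (pderiv i p) := by
  induction p using MvPolynomial.induction_on with
  | C a => simp
  | add p q hp hq => simp [hp, hq]
  | mul_X p k hp =>
    have hX : ∀ a b, pderiv a (pderiv b (X k : MvPolynomial σ R)) = 0 := by
      classical
      intro a b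
      rw [pderiv_X]
      by_cases hb : b = k <;> simp [hb]
    simp only [pderiv_mul, map_add, hp, hX, mul_zero]
    ring

theorem IsHomogeneous.mem_pow_idealOfVars {N : ℕ} {p : MvPolynomial σ R}
    (hp : p.IsHomogeneous N) : p ∈ idealOfVars σ R ^ N :=
  (mem_pow_idealOfVars_iff _ _).2 fun _ hm => (hp.degree_eq_sum_deg_support hm).le

theorem constantCoeff_eq_zero_of_mem_idealOfVars {p : MvPolynomial σ R}
    (hp : p ∈ idealOfVars σ R) : constantCoeff p = 0 := by
  rw [← pow_one (idealOfVars σ R), mem_pow_idealOfVars_iff'] at hp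
  exact hp 0 (by simp)

theorem pderiv_mem_pow_idealOfVars {N : ℕ} {p : MvPolynomial σ R}
    (hp : p ∈ idealOfVars σ R ^ (N + 1)) (i : σ) : pderiv i p ∈ idealOfVars σ R ^ N := by
  rw [mem_pow_idealOfVars_iff'] at hp ⊢
  intro m hm
  rw [coeff_pderiv, hp _ (by simpa using hm), zero_mul]

theorem IsHomogeneous.eval_smul [Fintype σ] {N : ℕ} {p : MvPolynomial σ R}
    (hp : p.IsHomogeneous N) (t : R) (z : σ → R) : eval (t • z) p = t ^ N * eval z p := by
  simp only [eval_eq', Finset.mul_sum, Pi.smul_apply, smul_eq_mul, mul_pow,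
    Finset.prod_mul_distrib, Finset.prod_pow_eq_pow_sum]
  refine Finset.sum_congr rfl fun m hm => ?_
  rw [← Finsupp.degree_eq_sum, Finsupp.degree_apply, ← hp.degree_eq_sum_deg_support hm]
  ring

theorem closed_iff_exact_of_isHomogeneous {K : Type*} [Fintype σ] [Field K] [CharZero K]
    {f : σ → MvPolynomial σ K} {d : ℕ} (hf : ∀ k, (f k).IsHomogeneous d) :
    (∀ k l, pderiv k (f l) = pderiv l (f k)) ↔ ∃ H, ∀ k, f k = pderiv k H := by
  classical
  refine ⟨fun hclosed => ⟨((d : K) + 1)⁻¹ • ∑ k, X k * f k, fun l => ?_⟩, ?_⟩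
  · have hEuler : ∑ k, X k * pderiv l (f k) = (d : K) • f l := by
      simpa only [hclosed l, Nat.cast_smul_eq_nsmul] using (hf l).sum_X_mul_pderiv
    have hderiv : pderiv l (∑ k, X k * f k) = ((d : K) + 1) • f l := by
      simp [Finset.sum_add_distrib, hEuler, pderiv_X, Pi.single_apply, add_smul, add_comm]
    rw [Derivation.map_smul, hderiv, smul_smul, inv_mul_cancel₀ (Nat.cast_add_one_ne_zero d),
      one_smul]
  · rintro ⟨H, hH⟩ k l
    rw [hH, hH, pderiv_pderiv_comm]

end Algebraic

section DirDeriv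

variable {σ R : Type*} [CommRing R] [Fintype σ]

def dirDeriv (u : σ → R) : MvPolynomial σ R →ₗ[R] MvPolynomial σ R :=
  ∑ i, u i • (pderiv i).toLinearMap

theorem dirDeriv_apply (u : σ → R) (p : MvPolynomial σ R) :
    dirDeriv u p = ∑ i, u i • pderiv i p := by
  simp [dirDeriv]

theorem dirDeriv_X (u : σ → R) (k : σ) : dirDeriv u (X k) = C (u k) := by
  classical
  simp [dirDeriv_apply, pderiv_X, Pi.single_apply, smul_eq_C_mul]

theorem dirDeriv_mem_pow_idealOfVars {N : ℕ} {p : MvPolynomial σ R}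
    (hp : p ∈ idealOfVars σ R ^ (N + 1)) (u : σ → R) : dirDeriv u p ∈ idealOfVars σ R ^ N := by
  rw [dirDeriv_apply]
  exact Ideal.sum_mem _ fun i _ =>
    Submodule.smul_of_tower_mem _ _ (pderiv_mem_pow_idealOfVars hp i)

/-- `d(∑ₗ fₗ dzₗ)(u, v)` for constant vectors `u`, `v`. -/
def extDerivOneForm (f : σ → MvPolynomial σ R) (u v : σ → R) : MvPolynomial σ R :=
  ∑ k, ∑ l, (u k * v l) • (pderiv k (f l) - pderiv l (f k))

theorem extDerivOneForm_single [DecidableEq σ] (f : σ → MvPolynomial σ R) (k l : σ) :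
    extDerivOneForm f (Pi.single k 1) (Pi.single l 1) = pderiv k (f l) - pderiv l (f k) := by
  simp [extDerivOneForm, Pi.single_apply, ite_smul]

theorem extDerivOneForm_eq_zero {f : σ → MvPolynomial σ R}
    (hf : ∀ k l, pderiv k (f l) = pderiv l (f k)) (u v : σ → R) :
    extDerivOneForm f u v = 0 := by
  simp [extDerivOneForm, hf]

end DirDeriv

section Analytic

variable {ι 𝕜 : Type*} [Fintype ι] [NontriviallyNormedField 𝕜]

theorem hasFDerivAt_eval (p : MvPolynomial ι 𝕜) (z : ι → 𝕜) :
    HasFDerivAt (fun x => eval x p)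
      (∑ i, eval z (pderiv i p) • ContinuousLinearMap.proj i : (ι → 𝕜) →L[𝕜] 𝕜) z := by
  classical
  induction p using MvPolynomial.induction_on with
  | C a =>
    simp only [eval_C]
    exact (hasFDerivAt_const a z).congr_fderiv (by ext; simp)
  | add p q hp hq =>
    simp only [map_add]
    exact (hp.add hq).congr_fderiv (by ext; simp [add_mul, Finset.sum_add_distrib])
  | mul_X p k hp =>
    simp only [map_mul, eval_X]
    refine (hp.mul (hasFDerivAt_apply k z)).congr_fderiv ?_
    ext u
    simp [pderiv_X, Pi.single_apply, add_mul, Finset.sum_add_distrib, Finset.mul_sum, mul_assoc,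
      apply_ite]

theorem fderiv_pi_eval_apply {κ : Type*} [Fintype κ] (Q : κ → MvPolynomial ι 𝕜) (z u : ι → 𝕜) :
    fderiv 𝕜 (fun x k => eval x (Q k)) z u = fun k => eval z (dirDeriv u (Q k)) := by
  rw [fderiv_pi fun k => (hasFDerivAt_eval (Q k) z).differentiableAt]
  funext k
  simp [(hasFDerivAt_eval (Q k) z).fderiv, dirDeriv_apply, mul_comm]

theorem isBigO_eval_of_mem_pow_idealOfVars {N : ℕ} {p : MvPolynomial ι 𝕜}
    (hp : p ∈ idealOfVars ι 𝕜 ^ N) : (fun z => eval z p) =O[𝓝 0] fun z => ‖z‖ ^ N := by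
  induction N generalizing p with
  | zero => simpa using (continuous_eval p).continuousAt.isBigO_one 𝕜
  | succ N ih =>
    rw [pow_succ] at hp
    refine Submodule.mul_induction_on hp (fun a ha b hb => ?_) fun a b ha hb => ?_
    · have hb' : (fun z => eval z b) =O[𝓝 0] fun z => ‖z‖ := by
        simpa [constantCoeff_eq_zero_of_mem_idealOfVars hb] using
          (hasFDerivAt_eval b 0).isBigO_sub.norm_right
      simpa [pow_succ] using (ih ha).mul hb'
    · simpa using ha.add hb

theorem IsHomogeneous.eq_zero_of_isBigO {Q : MvPolynomial ι 𝕜} {D N : ℕ}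
    (hQ : Q.IsHomogeneous D) (hDN : D < N)
    (h : (fun z => eval z Q) =O[𝓝 0] fun z => ‖z‖ ^ N) : Q = 0 := by
  refine MvPolynomial.funext fun z => ?_
  by_contra hne
  rw [map_zero] at hne
  have hray : Tendsto (fun t : 𝕜 => t • z) (𝓝 0) (𝓝 0) := by
    simpa using (tendsto_id (x := 𝓝 (0 : 𝕜))).smul_const z
  have hnorm : (fun t : 𝕜 => ‖t • z‖ ^ N) =O[𝓝 0] fun t => t ^ N :=
    .of_bound (‖z‖ ^ N) (.of_forall fun t => by simp [norm_smul, mul_pow, mul_comm])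
  have hO : (fun t : 𝕜 => eval z Q * t ^ D) =O[𝓝 0] fun t => t ^ N :=
    ((h.comp_tendsto hray).congr_left fun t => by simp [hQ.eval_smul, mul_comm]).trans hnorm
  have ho := (isLittleO_const_mul_left_iff hne).mp (hO.trans_isLittleO (isLittleO_pow_pow hDN))
  refine isLittleO_irrefl ?_ ho
  exact ((eventually_mem_nhdsWithin (a := (0 : 𝕜)) (s := {0}ᶜ)).mono
    fun t ht => pow_ne_zero D ht).frequently.filter_mono nhdsWithin_le_nhds

end Analytic

end MvPolynomial

theorem stdSymp_fderiv_eval_pi {n : ℕ} (Q : Fin n ⊕ Fin n → MvPolynomial (Fin n ⊕ Fin n) ℂ)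
    (z u v : Fin n ⊕ Fin n → ℂ) :
    stdSymp n (fderiv ℂ (fun x k => eval x (Q k)) z u) (fderiv ℂ (fun x k => eval x (Q k)) z v)
      = eval z (sympForm (fun k => dirDeriv u (Q k)) (fun k => dirDeriv v (Q k))) := by
  rw [fderiv_pi_eval_apply, fderiv_pi_eval_apply, stdSymp_eq_sympForm, map_sympForm]

theorem sympForm_dirDeriv_C_add_sympForm_C_dirDeriv {n : ℕ} {A : Type*} [CommRing A]
    (x : Fin n ⊕ Fin n → MvPolynomial (Fin n ⊕ Fin n) A) (u v : Fin n ⊕ Fin n → A) :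
    sympForm (fun k => dirDeriv u (x k)) (fun k => C (v k))
        + sympForm (fun k => C (u k)) (fun k => dirDeriv v (x k))
      = extDerivOneForm (sympInterior x) u v := by
  have hint : ∀ w : Fin n ⊕ Fin n → A,
      sympInterior (fun k => dirDeriv w (x k)) = fun l => dirDeriv w (sympInterior x l) := by
    intro w; funext l; cases l <;> simp [sympInterior]
  rw [sympForm_comm (fun k => C (u k)), sympForm_eq_sum_sympInterior_mul,
    sympForm_eq_sum_sympInterior_mul, hint, hint]
  simp only [extDerivOneForm, dirDeriv_apply, smul_sub, Finset.sum_sub_distrib, Finset.sum_mul,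
    smul_eq_C_mul]
  rw [← sub_eq_add_neg, Finset.sum_comm]
  refine congrArg₂ (· - ·) ?_ ?_ <;>
    exact Finset.sum_congr rfl fun _ _ => Finset.sum_congr rfl fun _ _ => by rw [C_mul]; ring

theorem sympForm_dirDeriv_sub_extDerivOneForm_mem_pow {n e : ℕ} {A : Type*} [CommRing A]
    (he : 1 ≤ e) {Pd R : Fin n ⊕ Fin n → MvPolynomial (Fin n ⊕ Fin n) A}
    (hPd : ∀ k, Pd k ∈ idealOfVars _ A ^ (e + 1)) (hR : ∀ k, R k ∈ idealOfVars _ A ^ (e + 2))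
    (u v : Fin n ⊕ Fin n → A) :
    sympForm (fun k => dirDeriv u (X k + Pd k + R k)) (fun k => dirDeriv v (X k + Pd k + R k))
        - C (sympForm u v) - extDerivOneForm (sympInterior Pd) u v
      ∈ idealOfVars _ A ^ (e + 1) := by
  have hsplit : ∀ w : Fin n ⊕ Fin n → A, (fun k => dirDeriv w (X k + Pd k + R k))
      = (fun k => C (w k)) + (fun k => dirDeriv w (Pd k)) + fun k => dirDeriv w (R k) := by
    intro w; funext k; simp [dirDeriv_X]
  rw [hsplit, hsplit, map_sympForm C, ← sympForm_dirDeriv_C_add_sympForm_C_dirDeriv]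
  exact sympForm_add_add_sub_mem he (fun k => dirDeriv_mem_pow_idealOfVars (hPd k) u)
    (fun k => dirDeriv_mem_pow_idealOfVars (hPd k) v)
    (fun k => dirDeriv_mem_pow_idealOfVars (hR k) u) (fun k => dirDeriv_mem_pow_idealOfVars (hR k) v)

/-- Let `P(z) = z + P_d(z) + R(z)` be a polynomial map on `ℂ^{2n}`, where
the components of `P_d` are homogeneous of degree `d ≥ 2` and all monomials of `R` have
degree `≥ d+1`.  Then `P*ω − ω` vanishes to order `d` at the origin iff the 1-form
`P_d ⌟ ω` is closed, which holds iff `P_d` is a Hamiltonian vector field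
(`P_d ⌟ ω = dH` for a polynomial `H`). -/
theorem pullback_symplectic_to_order_iff_hamiltonian (n d : ℕ) (hd : 2 ≤ d)
    (Pd R : Fin n ⊕ Fin n → MvPolynomial (Fin n ⊕ Fin n) ℂ)
    (hPd : ∀ k, (Pd k).IsHomogeneous d)
    (hR : ∀ k, ∀ m ∈ (R k).support, d + 1 ≤ m.sum fun _ e => e) :
    -- the coefficients of the 1-form `P_d ⌟ ω`
    let f : Fin n ⊕ Fin n → MvPolynomial (Fin n ⊕ Fin n) ℂ :=
      Sum.elim (fun j => -Pd (Sum.inr j)) fun j => Pd (Sum.inl j)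
    -- the map `P`
    let P : (Fin n ⊕ Fin n → ℂ) → (Fin n ⊕ Fin n → ℂ) :=
      fun z k => z k + eval z (Pd k) + eval z (R k)
    ((∀ u v : Fin n ⊕ Fin n → ℂ,
        (fun z => stdSymp n (fderiv ℂ P z u) (fderiv ℂ P z v) - stdSymp n u v)
          =O[nhds 0] fun z : Fin n ⊕ Fin n → ℂ => ‖z‖ ^ d)
      ↔ ∀ k l : Fin n ⊕ Fin n, pderiv k (f l) = pderiv l (f k)) ∧
    ((∀ k l : Fin n ⊕ Fin n, pderiv k (f l) = pderiv l (f k))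
      ↔ ∃ H : MvPolynomial (Fin n ⊕ Fin n) ℂ, ∀ k, f k = pderiv k H) := by
  intro f P
  obtain ⟨e, rfl⟩ : ∃ e, d = e + 1 := ⟨d - 1, by omega⟩
  have hf : ∀ k, (f k).IsHomogeneous (e + 1) := by
    rintro (j | j)
    exacts [(hPd _).neg, hPd _]
  set Ω : (Fin n ⊕ Fin n → ℂ) → (Fin n ⊕ Fin n → ℂ) → MvPolynomial (Fin n ⊕ Fin n) ℂ :=
    fun u v => sympForm (fun k => dirDeriv u (X k + Pd k + R k))
      (fun k => dirDeriv v (X k + Pd k + R k)) - C (sympForm u v) with hΩ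
  have hP : P = fun x k => eval x (X k + Pd k + R k) := by
    funext x k
    simp [P]
  have hpullback : ∀ u v, (fun z => stdSymp n (fderiv ℂ P z u) (fderiv ℂ P z v) - stdSymp n u v)
      = fun z => eval z (Ω u v) := fun u v => funext fun z => by
    rw [hP, stdSymp_fderiv_eval_pi, hΩ, map_sub, eval_C, stdSymp_eq_sympForm]
  have hhigher : ∀ u v, Ω u v - extDerivOneForm f u v ∈ idealOfVars _ ℂ ^ (e + 1) :=
    sympForm_dirDeriv_sub_extDerivOneForm_mem_pow (by omega) (fun k => (hPd k).mem_pow_idealOfVars)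
      fun k => (mem_pow_idealOfVars_iff _ _).2 (hR k)
  refine ⟨⟨fun h k l => ?_, fun hclosed u v => ?_⟩, closed_iff_exact_of_isHomogeneous hf⟩
  · have hO : (fun z => eval z (extDerivOneForm f (Pi.single k 1) (Pi.single l 1)))
        =O[𝓝 0] fun z => ‖z‖ ^ (e + 1) :=
      ((hpullback _ _ ▸ h (Pi.single k 1) (Pi.single l 1)).sub
        (isBigO_eval_of_mem_pow_idealOfVars (hhigher (Pi.single k 1) (Pi.single l 1)))).congr_left
        fun z => by simp
    rw [extDerivOneForm_single] at hO
    exact sub_eq_zero.1 (((hf l).pderiv.sub (hf k).pderiv).eq_zero_of_isBigO (by omega) hO)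
  · rw [hpullback]
    simpa [extDerivOneForm_eq_zero hclosed] using
      isBigO_eval_of_mem_pow_idealOfVars (hhigher u v)
end
end

section
/- The vector space of degree-d homogeneous Hamiltonian polynomial vector fields on ℂ^{2n} is spanned by vector fields of the form z ↦ (Ja·z)^d · a, where a ranges over ℂ^{2n}. -/
noncomputable section

open MvPolynomial

/-- The symplectic involution `J(z) = (−z_{n+1},…,−z_{2n}, z_1,…,z_n)` on `ℂ^{2n}`,
with coordinates indexed by `Fin n ⊕ Fin n`. -/
def Jmap (n : ℕ) (a : Fin n ⊕ Fin n → ℂ) : Fin n ⊕ Fin n → ℂ :=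
  Sum.elim (fun j => -a (Sum.inr j)) fun j => a (Sum.inl j)

/-- The linear form `z ↦ Ja·z` as a polynomial. -/
def linFormJ (n : ℕ) (a : Fin n ⊕ Fin n → ℂ) : MvPolynomial (Fin n ⊕ Fin n) ℂ :=
  ∑ k, C (Jmap n a k) * X k

/-- The shear vector field `z ↦ (Ja·z)^d · a`, with polynomial components. -/
def shearField (n d : ℕ) (a : Fin n ⊕ Fin n → ℂ) :
    Fin n ⊕ Fin n → MvPolynomial (Fin n ⊕ Fin n) ℂ :=
  fun k => linFormJ n a ^ d * C (a k)

/-!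
A homogeneous Hamiltonian field of degree `d` is `J∇Q` for a homogeneous `Q` of degree `d + 1`:
replace `Q` by its homogeneous component of degree `d + 1`. In characteristic zero the
homogeneous polynomials of degree `m` are spanned by the `m`-th powers of linear forms: a linear
functional `φ` killing every `(c·X)^m` makes `c ↦ φ((c·X)^m)` the zero polynomial, and by the
multinomial expansion its coefficients are the values of `φ` on the monomials, up to nonzero
multinomial factors. Finally `J∇((Ja·z)^(d+1)) = -(d+1) (Ja·z)^d a`, and every linear form is
`Ja·z` for some `a`.
-/

open scoped Pointwise

namespace MvPolynomial

variable {σ R K : Type*}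

lemma linearMap_apply_monomial [CommSemiring R] {M : Type*} [AddCommMonoid M] [Module R M]
    (f : MvPolynomial σ R →ₗ[R] M) (s : σ →₀ ℕ) (a : R) :
    f (monomial s a) = a • f (monomial s 1) := by
  rw [← map_smul, smul_monomial, smul_eq_mul, mul_one]

lemma pderiv_homogeneousComponent_succ [CommSemiring R] (i : σ) (m : ℕ) (p : MvPolynomial σ R) :
    pderiv i (homogeneousComponent (m + 1) p) = homogeneousComponent m (pderiv i p) := by
  classical
  ext u
  have hdeg : (u + Finsupp.single i 1).degree = u.degree + 1 := by
    rw [map_add, Finsupp.degree_single]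
  simp only [coeff_pderiv, coeff_homogeneousComponent, hdeg, add_left_inj, ite_mul, zero_mul]

variable [Fintype σ]

lemma sum_smul_X_pow_eq_sum_monomial [DecidableEq σ] [CommSemiring R] (c : σ → R) (m : ℕ) :
    (∑ i, c i • X i : MvPolynomial σ R) ^ m =
      ∑ s ∈ Finset.univ.finsuppAntidiag m,
        monomial s (s.multinomial * s.prod fun i k => c i ^ k) := by
  ext t
  simp [coeff_linearCombination_X_pow_of_fintype, coeff_sum, coeff_monomial,
    Finsupp.sum_fintype]

variable [Field K]

lemma dual_apply_sum_smul_X_pow [DecidableEq σ] (φ : Module.Dual K (MvPolynomial σ K))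
    (c : σ → K) (m : ℕ) :
    φ ((∑ i, c i • X i) ^ m) =
      eval c (∑ s ∈ Finset.univ.finsuppAntidiag m,
        monomial s (s.multinomial * φ (monomial s 1))) := by
  rw [sum_smul_X_pow_eq_sum_monomial, map_sum, map_sum]
  refine Finset.sum_congr rfl fun s _ => ?_
  rw [eval_monomial, linearMap_apply_monomial, smul_eq_mul]
  ring

variable [CharZero K]

lemma dual_apply_monomial_eq_zero_of_forall_sum_smul_X_pow
    {φ : Module.Dual K (MvPolynomial σ K)} {m : ℕ}
    (hφ : ∀ c : σ → K, φ ((∑ i, c i • X i) ^ m) = 0) {s : σ →₀ ℕ} (hs : s.degree = m) :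
    φ (monomial s 1) = 0 := by
  classical
  have hP : ∑ t ∈ Finset.univ.finsuppAntidiag m, monomial t (t.multinomial * φ (monomial t 1))
      = 0 :=
    funext fun c => by rw [← dual_apply_sum_smul_X_pow, hφ, map_zero]
  have hs' : s ∈ Finset.univ.finsuppAntidiag m := by
    simp [Finset.mem_finsuppAntidiag, ← hs, Finsupp.degree_eq_sum]
  have hcoeff := congrArg (coeff s) hP
  simp only [coeff_sum, coeff_monomial, Finset.sum_ite_eq', if_pos hs', coeff_zero] at hcoeff
  exact (mul_eq_zero.mp hcoeff).resolve_left (Nat.cast_ne_zero.mpr (Nat.multinomial_pos _ _).ne')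

theorem span_range_sum_smul_X_pow (m : ℕ) :
    Submodule.span K (Set.range fun c : σ → K => (∑ i, c i • X i : MvPolynomial σ K) ^ m) =
      homogeneousSubmodule σ K m := by
  refine le_antisymm (Submodule.span_le.mpr ?_) fun p hp => ?_
  · rintro _ ⟨c, rfl⟩
    have hlin : (∑ i, c i • X i : MvPolynomial σ K).IsHomogeneous 1 :=
      IsHomogeneous.sum _ _ _ fun i _ => by
        simpa only [smul_eq_C_mul] using (isHomogeneous_X K i).C_mul (c i)
    simpa using hlin.pow m
  · by_contra hp'
    obtain ⟨φ, hφp, hφ⟩ := Submodule.exists_dual_map_eq_bot_of_notMem hp' inferInstance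
    have hpow (c : σ → K) : φ ((∑ i, c i • X i) ^ m) = 0 :=
      (Submodule.eq_bot_iff _).mp hφ _
        (Submodule.mem_map_of_mem (Submodule.subset_span ⟨c, rfl⟩))
    refine hφp ?_
    rw [p.as_sum, map_sum]
    refine Finset.sum_eq_zero fun s hs => ?_
    have hs_deg : s.degree = m := by
      rw [Finsupp.degree_eq_weight_one]
      exact hp (mem_support_iff.mp hs)
    rw [linearMap_apply_monomial,
      dual_apply_monomial_eq_zero_of_forall_sum_smul_X_pow hpow hs_deg, smul_zero]

end MvPolynomial

section HamiltonianVectorField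

variable {ι R : Type*} [CommRing R]

variable (ι R) in
/-- `Q ↦ J∇Q`, with `J` as in `Jmap`. -/
def hamiltonianVectorField :
    MvPolynomial (ι ⊕ ι) R →ₗ[R] (ι ⊕ ι → MvPolynomial (ι ⊕ ι) R) :=
  LinearMap.pi <| Sum.elim (fun j => -(pderiv (Sum.inr j)).toLinearMap)
    fun j => (pderiv (Sum.inl j)).toLinearMap

@[simp] lemma hamiltonianVectorField_inl (Q : MvPolynomial (ι ⊕ ι) R) (j : ι) :
    hamiltonianVectorField ι R Q (Sum.inl j) = -pderiv (Sum.inr j) Q := rfl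

@[simp] lemma hamiltonianVectorField_inr (Q : MvPolynomial (ι ⊕ ι) R) (j : ι) :
    hamiltonianVectorField ι R Q (Sum.inr j) = pderiv (Sum.inl j) Q := rfl

lemma hamiltonianVectorField_eq_iff {Q : MvPolynomial (ι ⊕ ι) R}
    {V : ι ⊕ ι → MvPolynomial (ι ⊕ ι) R} :
    hamiltonianVectorField ι R Q = V ↔
      ∀ j, V (Sum.inl j) = -pderiv (Sum.inr j) Q ∧ V (Sum.inr j) = pderiv (Sum.inl j) Q := by
  simp only [funext_iff, Sum.forall, hamiltonianVectorField_inl, hamiltonianVectorField_inr,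
    forall_and, eq_comm]

lemma hamiltonianVectorField_homogeneousComponent (d : ℕ) (Q : MvPolynomial (ι ⊕ ι) R)
    (k : ι ⊕ ι) :
    hamiltonianVectorField ι R (homogeneousComponent (d + 1) Q) k =
      homogeneousComponent d (hamiltonianVectorField ι R Q k) := by
  cases k <;> simp [pderiv_homogeneousComponent_succ]

lemma setOf_isHomogeneous_hamiltonianVectorField (d : ℕ) :
    {V | (∀ k, (V k).IsHomogeneous d) ∧ ∃ Q, hamiltonianVectorField ι R Q = V} =
      hamiltonianVectorField ι R '' homogeneousSubmodule (ι ⊕ ι) R (d + 1) := by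
  ext V
  constructor
  · rintro ⟨hV, Q, rfl⟩
    refine ⟨homogeneousComponent (d + 1) Q, homogeneousComponent_isHomogeneous _ _, ?_⟩
    funext k
    rw [hamiltonianVectorField_homogeneousComponent, homogeneousComponent_eq_self (hV k)]
  · rintro ⟨Q, hQ, rfl⟩
    refine ⟨fun k => ?_, Q, rfl⟩
    rw [← homogeneousComponent_eq_self hQ, hamiltonianVectorField_homogeneousComponent]
    exact homogeneousComponent_isHomogeneous _ _

end HamiltonianVectorField

lemma Jmap_Jmap (n : ℕ) (a : Fin n ⊕ Fin n → ℂ) : Jmap n (Jmap n a) = -a := by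
  funext k; cases k <;> simp [Jmap]

lemma Jmap_surjective (n : ℕ) : Function.Surjective (Jmap n) :=
  fun c => ⟨Jmap n (-c), by rw [Jmap_Jmap, neg_neg]⟩

lemma linFormJ_eq_sum_smul_X (n : ℕ) (a : Fin n ⊕ Fin n → ℂ) :
    linFormJ n a = ∑ k, Jmap n a k • X k := by
  simp only [linFormJ, smul_eq_C_mul]

lemma span_range_linFormJ_pow (n m : ℕ) :
    Submodule.span ℂ (Set.range fun a => linFormJ n a ^ m) =
      homogeneousSubmodule (Fin n ⊕ Fin n) ℂ m := by
  simp_rw [linFormJ_eq_sum_smul_X]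
  rw [← span_range_sum_smul_X_pow m]
  congr 1
  exact (Jmap_surjective n).range_comp fun c => (∑ i, c i • X i : MvPolynomial _ ℂ) ^ m

lemma pderiv_linFormJ (n : ℕ) (a : Fin n ⊕ Fin n → ℂ) (i : Fin n ⊕ Fin n) :
    pderiv i (linFormJ n a) = C (Jmap n a i) := by
  simp only [linFormJ, map_sum, pderiv_C_mul, pderiv_X, Pi.single_apply, mul_ite, mul_one,
    mul_zero, Finset.sum_ite_eq', Finset.mem_univ, if_true]

lemma hamiltonianVectorField_linFormJ_pow (n d : ℕ) (a : Fin n ⊕ Fin n → ℂ) :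
    hamiltonianVectorField (Fin n) ℂ (linFormJ n a ^ (d + 1)) =
      (-((d : ℂ) + 1)) • shearField n d a := by
  funext k
  cases k <;>
  · simp only [hamiltonianVectorField_inl, hamiltonianVectorField_inr, pderiv_pow,
      pderiv_linFormJ, Pi.smul_apply, shearField, smul_eq_C_mul, Jmap]
    simp only [Sum.elim_inl, Sum.elim_inr, Nat.add_sub_cancel, map_neg, map_add, map_one,
      map_natCast, Nat.cast_add, Nat.cast_one]
    ring

/-- The space of degree-`d` homogeneous Hamiltonian polynomial vector
fields on `ℂ^{2n}` (fields of the form `J∇Q`) is spanned by the vector fields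
`z ↦ (Ja·z)^d · a`, `a ∈ ℂ^{2n}`. -/
theorem hamiltonian_fields_spanned_by_shears (n d : ℕ) :
    Submodule.span ℂ
        {V : Fin n ⊕ Fin n → MvPolynomial (Fin n ⊕ Fin n) ℂ |
          (∀ k, (V k).IsHomogeneous d) ∧
          ∃ Q : MvPolynomial (Fin n ⊕ Fin n) ℂ,
            ∀ j : Fin n, V (Sum.inl j) = -pderiv (Sum.inr j) Q ∧
              V (Sum.inr j) = pderiv (Sum.inl j) Q}
      = Submodule.span ℂ (Set.range (shearField n d)) := by
  have hunit : IsUnit (-((d : ℂ) + 1)) := (neg_ne_zero.mpr (Nat.cast_add_one_ne_zero d)).isUnit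
  simp_rw [← hamiltonianVectorField_eq_iff]
  rw [setOf_isHomogeneous_hamiltonianVectorField, ← Submodule.map_coe, Submodule.span_eq,
    ← span_range_linFormJ_pow, Submodule.map_span, ← Set.range_comp]
  calc Submodule.span ℂ
          (Set.range fun a => hamiltonianVectorField (Fin n) ℂ (linFormJ n a ^ (d + 1)))
      = Submodule.span ℂ ((-((d : ℂ) + 1)) • Set.range (shearField n d)) := by
        simp_rw [hamiltonianVectorField_linFormJ_pow, Set.smul_set_range]
    _ = Submodule.span ℂ (Set.range (shearField n d)) :=
        Submodule.span_smul_eq_of_isUnit _ _ hunit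
end
end
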